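/- Let A be a seminormed ring. A nonempty closed subset Z of TopSpec(A) is irreducible if and only if there exists a spectrally reduced prime ideal p of A such that Z = V(p) = { q ∈ TopSpec(A) : p ⊆ q }. -/

import Mathlib

open Filter Topology

/-- A bounded power-multiplicative (nonarchimedean, submultiplicative) ring seminorm
on a seminormed commutative ring. -/
structure IsBddPowMulSeminorm {A : Type*} [SeminormedCommRing A] (φ : A → ℝ) : Prop where
  nonneg : ∀ f, 0 ≤ φ f
  map_zero : φ 0 = 0
  map_one : φ 1 = 1
  map_neg : ∀ f, φ (-f) = φ f
  nonarch : ∀ f g, φ (f + g) ≤ max (φ f) (φ g)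
  submul : ∀ f g, φ (f * g) ≤ φ f * φ g
  pow_mul : ∀ f, ∀ n : ℕ, 1 ≤ n → φ (f ^ n) = φ f ^ n
  bounded : ∃ C > 0, ∀ f, φ f ≤ C * ‖f‖

/-- An ideal is spectrally reduced if it is the kernel of some bounded
power-multiplicative seminorm. -/
def IsSpectrallyReduced {A : Type*} [SeminormedCommRing A] (I : Ideal A) : Prop :=
  ∃ φ : A → ℝ, IsBddPowMulSeminorm φ ∧ ∀ f, f ∈ I ↔ φ f = 0

/-- The topological spectrum: the subspace of `Spec A` consisting of the spectrally
reduced prime ideals, with the topology induced from the Zariski topology. -/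
abbrev TopSpec (A : Type*) [SeminormedCommRing A] : Type _ :=
  {p : PrimeSpectrum A // IsSpectrallyReduced p.asIdeal}

/-!
Irreducible closed subsets of `Spec A` are exactly the sets `V(p)` with `p` prime, namely
`p = I(Z)`, the vanishing ideal of `Z`; closures in the subspace `TopSpec A` are cut out by
the same ideals. So the only point is that `I(Z)` is again spectrally reduced when `Z` consists
of spectrally reduced primes. Every bounded power-multiplicative seminorm is bounded by the norm
itself, so the pointwise supremum of the seminorms witnessing the primes of `Z` exists; it is
again a bounded power-multiplicative seminorm, and its kernel is `I(Z)`.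
-/

open PrimeSpectrum

section

variable {A : Type*} [SeminormedCommRing A]

lemma IsBddPowMulSeminorm.le_norm {φ : A → ℝ} (hφ : IsBddPowMulSeminorm φ) (f : A) :
    φ f ≤ ‖f‖ :=
  contraction_of_isPowMul_of_boundedWrt (SeminormedRing.toRingSeminorm A) (f := RingHom.id A)
    (fun a _ hn => hφ.pow_mul a _ hn) hφ.bounded f

lemma IsBddPowMulSeminorm.bddAbove_range_apply {ι : Type*} {φ : ι → A → ℝ}
    (hφ : ∀ i, IsBddPowMulSeminorm (φ i)) (f : A) : BddAbove (Set.range fun i => φ i f) :=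
  ⟨‖f‖, Set.forall_mem_range.2 fun i => (hφ i).le_norm f⟩

lemma IsBddPowMulSeminorm.iSup {ι : Type*} [Nonempty ι] {φ : ι → A → ℝ}
    (hφ : ∀ i, IsBddPowMulSeminorm (φ i)) : IsBddPowMulSeminorm fun f => ⨆ i, φ i f := by
  have hle (f : A) (i : ι) : φ i f ≤ ⨆ i, φ i f := le_ciSup (bddAbove_range_apply hφ f) i
  have hnonneg (f : A) : 0 ≤ ⨆ i, φ i f := Real.iSup_nonneg fun i => (hφ i).nonneg f
  refine ⟨hnonneg, ?_, ?_, ?_, ?_, ?_, ?_, ⟨1, one_pos, fun f => ?_⟩⟩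
  · simp only [fun i => (hφ i).map_zero, ciSup_const]
  · simp only [fun i => (hφ i).map_one, ciSup_const]
  · intro f
    simp only [fun i => (hφ i).map_neg f]
  · intro f g
    exact ciSup_le fun i => ((hφ i).nonarch f g).trans (max_le_max (hle f i) (hle g i))
  · intro f g
    exact ciSup_le fun i => ((hφ i).submul f g).trans
      (mul_le_mul (hle f i) (hle g i) ((hφ i).nonneg g) (hnonneg f))
  · intro f n hn
    simp only [fun i => (hφ i).pow_mul f n hn]
    exact (Real.iSup_pow (fun i => (hφ i).nonneg f) n).symm
  · exact (one_mul ‖f‖).symm ▸ ciSup_le fun i => (hφ i).le_norm f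

lemma IsSpectrallyReduced.iInf {ι : Type*} [Nonempty ι] {I : ι → Ideal A}
    (hI : ∀ i, IsSpectrallyReduced (I i)) : IsSpectrallyReduced (⨅ i, I i) := by
  choose φ hφ hker using hI
  refine ⟨fun f => ⨆ i, φ i f, IsBddPowMulSeminorm.iSup hφ, fun f => ?_⟩
  rw [Submodule.mem_iInf, ← (Real.iSup_nonneg fun i => (hφ i).nonneg f).ge_iff_eq',
    ciSup_le_iff (IsBddPowMulSeminorm.bddAbove_range_apply hφ f)]
  exact forall_congr' fun i => (hker i f).trans ((hφ i).nonneg f).ge_iff_eq'.symm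

namespace TopSpec

lemma isSpectrallyReduced_vanishingIdeal {Z : Set (TopSpec A)} (hZ : Z.Nonempty) :
    IsSpectrallyReduced (vanishingIdeal (Subtype.val '' Z)) := by
  have : Nonempty Z := hZ.to_subtype
  convert IsSpectrallyReduced.iInf fun q : Z => q.1.2 using 1
  ext f
  simp [mem_vanishingIdeal, Submodule.mem_iInf]

lemma closure_eq_setOf_vanishingIdeal_le (Z : Set (TopSpec A)) :
    closure Z = {q : TopSpec A | vanishingIdeal (Subtype.val '' Z) ≤ q.1.asIdeal} := by
  ext q
  rw [closure_subtype, ← zeroLocus_vanishingIdeal_eq_closure, mem_zeroLocus]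
  rfl

end TopSpec

end

theorem topSpec_closed_irreducible_iff {A : Type*} [SeminormedCommRing A]
    (Z : Set (TopSpec A)) (hZc : IsClosed Z) :
    IsIrreducible Z ↔ ∃ p : PrimeSpectrum A, IsSpectrallyReduced p.asIdeal ∧
      Z = {q : TopSpec A | p.asIdeal ≤ q.1.asIdeal} := by
  constructor
  · intro hZ
    have hprime : (vanishingIdeal (Subtype.val '' Z)).IsPrime :=
      isIrreducible_iff_vanishingIdeal_isPrime.mp (hZ.image _ continuous_subtype_val.continuousOn)
    refine ⟨⟨_, hprime⟩, TopSpec.isSpectrallyReduced_vanishingIdeal hZ.nonempty, ?_⟩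
    rw [← TopSpec.closure_eq_setOf_vanishingIdeal_le, hZc.closure_eq]
  · rintro ⟨p, hp, rfl⟩
    have hV := TopSpec.closure_eq_setOf_vanishingIdeal_le {(⟨p, hp⟩ : TopSpec A)}
    rw [Set.image_singleton, vanishingIdeal_singleton] at hV
    exact hV ▸ isIrreducible_singleton.closure
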